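/- arXiv:2311.01824 — 2 statements merged into one kernel-verified Lean document; each statement's English description precedes it below -/
import Mathlib

section
/- Let m ≥ 1 and β ∈ ℝ^m. The flow distance d_Z is equivalent to the Carnot–Carathéodory distance d_G: there exists a constant D ≥ 1 (depending on β) such that D^{-1} d_Z(x,y) ≤ d_G(x,y) ≤ D d_Z(x,y) for all x, y ∈ G. -/
/-- The inverse hyperbolic cosine. -/
noncomputable def arcosh (x : ℝ) : ℝ := Real.log (x + Real.sqrt (x ^ 2 - 1))

/-- The Carnot–Carathéodory distance on `G = ℝ^m × (0,∞)`, given explicitly by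
`d_G((n,a),(n',a')) = arcosh( cosh(log(a/a')) + |n − n'|²/(2 a a') )`. -/
noncomputable def dG {m : ℕ} (x y : EuclideanSpace ℝ (Fin m) × ℝ) : ℝ :=
  arcosh (Real.cosh (Real.log (x.2 / y.2)) + ‖x.1 - y.1‖ ^ 2 / (2 * x.2 * y.2))

/-- The flow distance `d_Z` associated with `β ∈ ℝ^m`:
`d_Z((n,a),(n',a')) = d_G((n − (a−1)β, a), (n' − (a'−1)β, a'))`. -/
noncomputable def dZ {m : ℕ} (β : EuclideanSpace ℝ (Fin m))
    (x y : EuclideanSpace ℝ (Fin m) × ℝ) : ℝ :=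
  dG (x.1 - (x.2 - 1) • β, x.2) (y.1 - (y.2 - 1) • β, y.2)

/-!
Both distances have the form `arcosh (1 + ((a - a')² + ‖v‖²) / (2 a a'))`, with `v = n - n'` for
`d_G` and `v = n - n' - (a - a') β` for `d_Z`, and the two arguments of `arcosh` are within the
factor `2 + 2‖β‖²` of each other. Since `cosh (k t) - 1 ≥ k² (cosh t - 1)`, multiplying `q` by at
most `k²` multiplies `arcosh (1 + q)` by at most `k`. Finally `(n, a) ↦ (n - (a - 1) β, a)` has
inverse `(n, a) ↦ (n + (a - 1) β, a)`, so `d_G` is the flow distance of `-β` in these coordinates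
and one inequality yields the other.
-/

lemma arcosh_eq_real_arcosh : arcosh = Real.arcosh := rfl

namespace Real

lemma nat_mul_sinh_le_sinh_nat_mul (n : ℕ) {t : ℝ} (ht : 0 ≤ t) :
    n * sinh t ≤ sinh (n * t) := by
  induction n with
  | zero => simp
  | succ k ih =>
    have hsinh_t : 0 ≤ sinh t := sinh_nonneg_iff.mpr ht
    have hsinh_kt : 0 ≤ sinh (k * t) := sinh_nonneg_iff.mpr (by positivity)
    have hcosh_kt := one_le_cosh (k * t)
    have hcosh_t := one_le_cosh t
    push_cast
    rw [add_one_mul (k : ℝ) t, sinh_add]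
    nlinarith

lemma cosh_sub_one_eq_two_mul_sinh_half_sq (t : ℝ) : cosh t - 1 = 2 * sinh (t / 2) ^ 2 := by
  have h := cosh_two_mul (t / 2)
  rw [mul_div_cancel₀ t two_ne_zero, cosh_sq] at h
  linarith

lemma nat_sq_mul_cosh_sub_one_le (n : ℕ) {t : ℝ} (ht : 0 ≤ t) :
    n ^ 2 * (cosh t - 1) ≤ cosh (n * t) - 1 := by
  have hsinh : n * sinh (t / 2) ≤ sinh (n * (t / 2)) :=
    nat_mul_sinh_le_sinh_nat_mul n (by linarith)
  have hsinh_nonneg : 0 ≤ n * sinh (t / 2) := by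
    have := sinh_nonneg_iff.mpr (show 0 ≤ t / 2 by linarith)
    positivity
  rw [cosh_sub_one_eq_two_mul_sinh_half_sq, cosh_sub_one_eq_two_mul_sinh_half_sq, mul_div_assoc]
  nlinarith [pow_le_pow_left₀ hsinh_nonneg hsinh 2]

lemma arcosh_one_add_le_nat_mul (n : ℕ) {r s : ℝ} (hr : 0 ≤ r) (hs : 0 ≤ s)
    (hrs : r ≤ n ^ 2 * s) : arcosh (1 + r) ≤ n * arcosh (1 + s) := by
  set t := arcosh (1 + s)
  have ht : 0 ≤ t := arcosh_nonneg (by linarith)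
  have hcosh_t : cosh t = 1 + s := cosh_arcosh (by linarith)
  have hle : 1 + r ≤ cosh (n * t) := by
    have := nat_sq_mul_cosh_sub_one_le n ht
    rw [hcosh_t] at this
    linarith
  calc arcosh (1 + r) ≤ arcosh (cosh (n * t)) :=
        (arcosh_le_arcosh (by linarith) (by linarith [one_le_cosh (n * t)])).mpr hle
    _ = n * t := arcosh_cosh (by positivity)

lemma cosh_log_div {a b : ℝ} (ha : 0 < a) (hb : 0 < b) :
    cosh (log (a / b)) = 1 + (a - b) ^ 2 / (2 * a * b) := by
  rw [cosh_eq, exp_neg, exp_log (by positivity)]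
  field_simp
  ring

end Real

lemma sq_add_norm_sub_smul_sq_le {E : Type*} [SeminormedAddCommGroup E] [NormedSpace ℝ E]
    (t : ℝ) (u v : E) :
    t ^ 2 + ‖u - t • v‖ ^ 2 ≤ (2 + 2 * ‖v‖ ^ 2) * (t ^ 2 + ‖u‖ ^ 2) := by
  have hnorm : ‖u - t • v‖ ≤ ‖u‖ + |t| * ‖v‖ := by
    simpa only [norm_smul, Real.norm_eq_abs] using norm_sub_le u (t • v)
  have hsq : ‖u - t • v‖ ^ 2 ≤ 2 * (‖u‖ ^ 2 + t ^ 2 * ‖v‖ ^ 2) := by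
    calc ‖u - t • v‖ ^ 2 ≤ (‖u‖ + |t| * ‖v‖) ^ 2 := by gcongr
      _ ≤ 2 * (‖u‖ ^ 2 + (|t| * ‖v‖) ^ 2) := add_sq_le
      _ = 2 * (‖u‖ ^ 2 + t ^ 2 * ‖v‖ ^ 2) := by rw [mul_pow, sq_abs]
  nlinarith [sq_nonneg t, sq_nonneg ‖u‖, sq_nonneg ‖v‖]

section

variable {m : ℕ}

lemma dG_eq {x y : EuclideanSpace ℝ (Fin m) × ℝ} (hx : 0 < x.2) (hy : 0 < y.2) :
    dG x y = Real.arcosh (1 + ((x.2 - y.2) ^ 2 + ‖x.1 - y.1‖ ^ 2) / (2 * x.2 * y.2)) := by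
  rw [dG, Real.cosh_log_div hx hy, arcosh_eq_real_arcosh, add_div, add_assoc]

lemma dZ_le_ceil_mul_dG (β : EuclideanSpace ℝ (Fin m)) {x y : EuclideanSpace ℝ (Fin m) × ℝ}
    (hx : 0 < x.2) (hy : 0 < y.2) :
    dZ β x y ≤ ⌈2 + 2 * ‖β‖ ^ 2⌉₊ * dG x y := by
  have hdiff : x.1 - (x.2 - 1) • β - (y.1 - (y.2 - 1) • β) = x.1 - y.1 - (x.2 - y.2) • β := by
    rw [sub_smul, sub_smul, sub_smul]
    abel
  have hC : 2 + 2 * ‖β‖ ^ 2 ≤ (⌈2 + 2 * ‖β‖ ^ 2⌉₊ : ℝ) ^ 2 := by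
    have hceil := Nat.le_ceil (2 + 2 * ‖β‖ ^ 2)
    nlinarith [sq_nonneg ‖β‖]
  rw [dZ, dG_eq hx hy, dG_eq (x := (x.1 - (x.2 - 1) • β, x.2)) (y := (y.1 - (y.2 - 1) • β, y.2))
    hx hy, hdiff]
  apply Real.arcosh_one_add_le_nat_mul _ (by positivity) (by positivity)
  rw [← mul_div_assoc]
  gcongr
  exact (sq_add_norm_sub_smul_sq_le _ _ _).trans (by gcongr)

lemma dG_eq_dZ_neg (β : EuclideanSpace ℝ (Fin m)) (x y : EuclideanSpace ℝ (Fin m) × ℝ) :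
    dG x y = dZ (-β) (x.1 - (x.2 - 1) • β, x.2) (y.1 - (y.2 - 1) • β, y.2) := by
  simp only [dZ, smul_neg, sub_neg_eq_add, sub_add_cancel]

end

theorem dZ_equiv_dG_general (m : ℕ) (β : EuclideanSpace ℝ (Fin m)) :
    ∃ D : ℝ, 1 ≤ D ∧ ∀ x y : EuclideanSpace ℝ (Fin m) × ℝ, 0 < x.2 → 0 < y.2 →
      D⁻¹ * dZ β x y ≤ dG x y ∧ dG x y ≤ D * dZ β x y := by
  have hD : (1 : ℝ) ≤ ⌈2 + 2 * ‖β‖ ^ 2⌉₊ := by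
    have := Nat.le_ceil (2 + 2 * ‖β‖ ^ 2)
    nlinarith [sq_nonneg ‖β‖]
  refine ⟨_, hD, fun x y hx hy => ⟨?_, ?_⟩⟩
  · rw [inv_mul_le_iff₀ (by linarith)]
    exact dZ_le_ceil_mul_dG β hx hy
  · rw [dG_eq_dZ_neg β x y]
    have h := dZ_le_ceil_mul_dG (-β) (x := (x.1 - (x.2 - 1) • β, x.2))
      (y := (y.1 - (y.2 - 1) • β, y.2)) hx hy
    rwa [norm_neg] at h

/-- the flow distance `d_Z` is equivalent to the Carnot–Carathéodory distance
`d_G`: there is a constant `D ≥ 1` (depending on `β`) such that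
`D⁻¹ d_Z(x,y) ≤ d_G(x,y) ≤ D d_Z(x,y)` for all `x, y ∈ G`. -/
theorem dZ_equiv_dG (m : ℕ) (hm : 1 ≤ m) (β : EuclideanSpace ℝ (Fin m)) :
    ∃ D : ℝ, 1 ≤ D ∧ ∀ x y : EuclideanSpace ℝ (Fin m) × ℝ, 0 < x.2 → 0 < y.2 →
      D⁻¹ * dZ β x y ≤ dG x y ∧ dG x y ≤ D * dZ β x y :=
  dZ_equiv_dG_general m β
end

section
/- Let m ≥ 1, β ∈ ℝ^m, and let μ be a Z-flow measure on G with associated measure μ_N on ℝ^m. Then for every Borel set E ⊆ ℝ^m, every r > 1 and every a > 0, the cylinder P_{r,E}(a) satisfies μ(P_{r,E}(a)) = 2 (log r) · μ_N(E). -/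
open MeasureTheory
open scoped ENNReal NNReal

/-- The right Haar measure `dρ(n,a) = a⁻¹ dn da` of `G = ℝ^m × (0,∞)`, viewed as a measure
on `ℝ^m × ℝ` concentrated on `a > 0`. -/
noncomputable def rhoG (m : ℕ) : Measure (EuclideanSpace ℝ (Fin m) × ℝ) :=
  (volume : Measure (EuclideanSpace ℝ (Fin m) × ℝ)).withDensity
    (fun x => if 0 < x.2 then ENNReal.ofReal x.2⁻¹ else 0)

/-- `φ` is the density of a `Z`-flow measure for `Z = X₀ + Σᵢ βᵢ X_{1,i}`:
`φ(n + a(e^t−1)β, a e^t) = φ(n,a)` for all `(n,a) ∈ G` and `t ∈ ℝ`. -/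
def IsZFlowDensity {m : ℕ} (β : EuclideanSpace ℝ (Fin m))
    (φ : EuclideanSpace ℝ (Fin m) × ℝ → ℝ) : Prop :=
  ∀ (n : EuclideanSpace ℝ (Fin m)) (a t : ℝ), 0 < a →
    φ (n + (a * (Real.exp t - 1)) • β, a * Real.exp t) = φ (n, a)

/-- The `Z`-flow measure `μ = φ dρ`. -/
noncomputable def muZ {m : ℕ} (φ : EuclideanSpace ℝ (Fin m) × ℝ → ℝ) :
    Measure (EuclideanSpace ℝ (Fin m) × ℝ) :=
  (rhoG m).withDensity (fun x => ENNReal.ofReal (φ x))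

/-- The associated measure `dμ_N(n) = φ(n,1) dn` on `ℝ^m`. -/
noncomputable def muN {m : ℕ} (φ : EuclideanSpace ℝ (Fin m) × ℝ → ℝ) :
    Measure (EuclideanSpace ℝ (Fin m)) :=
  (volume : Measure (EuclideanSpace ℝ (Fin m))).withDensity
    (fun n => ENNReal.ofReal (φ (n, 1)))

/-- The cylinder `P_{r,E}(a) = { (n + (e^t − 1)β, e^t) : n ∈ E, t ∈ U_r(a) }`, where
`U_r(a) = (log(a/r), log(ar))`. -/
def cylinder {m : ℕ} (β : EuclideanSpace ℝ (Fin m)) (r a : ℝ)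
    (E : Set (EuclideanSpace ℝ (Fin m))) : Set (EuclideanSpace ℝ (Fin m) × ℝ) :=
  {x | ∃ n ∈ E, ∃ t ∈ Set.Ioo (Real.log (a / r)) (Real.log (a * r)),
    x = (n + (Real.exp t - 1) • β, Real.exp t)}

/-!
Shearing `(n, s) ↦ (n - (s - 1) • β, s)` preserves Lebesgue measure on `ℝ^m × ℝ` and maps the
cylinder onto the rectangle `E × (a/r, ar)`. Along each flow line `φ` is constant, so after the
shear the density `s⁻¹ φ(n, s)` becomes `s⁻¹ φ(n, 1)`, which splits as a product; the factor
`∫_{a/r}^{ar} ds / s` equals `2 log r`.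
-/

open Set

theorem measurePreserving_sub_shear {α γ : Type*} [MeasurableSpace α] [MeasurableSpace γ]
    [AddGroup α] [MeasurableAdd α] [MeasurableSub₂ α] (μ : Measure α) [SFinite μ]
    [μ.IsAddRightInvariant] (ν : Measure γ) [SFinite ν] {g : γ → α} (hg : Measurable g) :
    MeasurePreserving (fun x : α × γ => (x.1 - g x.2, x.2)) (μ.prod ν) (μ.prod ν) := by
  have hmeas : Measurable fun x : α × γ => (x.1 - g x.2, x.2) := by fun_prop
  refine ⟨hmeas, Measure.ext fun s hs => ?_⟩
  rw [Measure.map_apply hmeas hs, Measure.prod_apply_symm hs, Measure.prod_apply_symm (hmeas hs)]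
  congr! 2 with y
  simp_rw [sub_eq_add_neg]
  exact measure_preimage_add_right μ (-g y) ((fun x => (x, y)) ⁻¹' s)

theorem lintegral_inv_Ioo {b c : ℝ} (hb : 0 < b) (hbc : b ≤ c) :
    ∫⁻ s in Ioo b c, ENNReal.ofReal s⁻¹ = ENNReal.ofReal (Real.log (c / b)) := by
  have hint : IntegrableOn (fun s : ℝ => s⁻¹) (Ioo b c) :=
    ((continuousOn_inv₀.mono fun s hs => (hb.trans_le hs.1).ne').integrableOn_Icc).mono_set
      Ioo_subset_Icc_self
  rw [← ofReal_integral_eq_lintegral_ofReal hint, ← integral_Ioc_eq_integral_Ioo,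
    ← intervalIntegral.integral_of_le hbc, integral_inv_of_pos hb (hb.trans_le hbc)]
  filter_upwards [ae_restrict_mem measurableSet_Ioo] with s hs
  exact inv_nonneg.2 (hb.trans hs.1).le

theorem lintegral_inv_Ioo_div_mul {a r : ℝ} (ha : 0 < a) (hr : 1 ≤ r) :
    ∫⁻ s in Ioo (a / r) (a * r), ENNReal.ofReal s⁻¹ = ENNReal.ofReal (2 * Real.log r) := by
  have hr₀ : 0 < r := one_pos.trans_le hr
  rw [lintegral_inv_Ioo (div_pos ha hr₀)
    ((div_le_self ha.le hr).trans (le_mul_of_one_le_right ha.le hr)),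
    show a * r / (a / r) = r ^ 2 by field_simp, Real.log_pow, Nat.cast_ofNat]

section

variable {m : ℕ} {β : EuclideanSpace ℝ (Fin m)} {φ : EuclideanSpace ℝ (Fin m) × ℝ → ℝ}

theorem IsZFlowDensity.apply_eq (hφ : IsZFlowDensity β φ) {x : EuclideanSpace ℝ (Fin m) × ℝ}
    (hx : 0 < x.2) : φ x = φ (x.1 - (x.2 - 1) • β, 1) := by
  have h := hφ (x.1 - (x.2 - 1) • β) 1 (Real.log x.2) one_pos
  rwa [Real.exp_log hx, one_mul, one_mul, sub_add_cancel] at h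

theorem muZ_apply (hφ : Measurable φ) {S : Set (EuclideanSpace ℝ (Fin m) × ℝ)}
    (hS : MeasurableSet S) :
    muZ φ S = ∫⁻ x in S, (if 0 < x.2 then ENNReal.ofReal x.2⁻¹ else 0) * ENNReal.ofReal (φ x) := by
  have hρ : Measurable fun x : EuclideanSpace ℝ (Fin m) × ℝ =>
      if 0 < x.2 then ENNReal.ofReal x.2⁻¹ else 0 :=
    Measurable.ite (measurableSet_lt measurable_const measurable_snd)
      measurable_snd.inv.ennreal_ofReal measurable_const
  rw [muZ, withDensity_apply _ hS, rhoG,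
    setLIntegral_withDensity_eq_setLIntegral_mul _ hρ hφ.ennreal_ofReal hS]
  rfl

theorem cylinder_eq_preimage (β : EuclideanSpace ℝ (Fin m)) {r a : ℝ} (hr : 0 < r) (ha : 0 < a)
    (E : Set (EuclideanSpace ℝ (Fin m))) :
    cylinder β r a E =
      (fun x => (x.1 - (x.2 - 1) • β, x.2)) ⁻¹' (E ×ˢ Ioo (a / r) (a * r)) := by
  ext ⟨y, s⟩
  simp only [_root_.cylinder, mem_preimage, mem_prod, mem_Ioo, mem_ofPred_eq, Prod.mk.injEq]
  constructor
  · rintro ⟨n, hn, t, ⟨ht₁, ht₂⟩, rfl, rfl⟩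
    refine ⟨by simpa using hn, ?_, ?_⟩
    · rwa [← Real.log_lt_iff_lt_exp (div_pos ha hr)]
    · rwa [← Real.lt_log_iff_exp_lt (mul_pos ha hr)]
  · rintro ⟨hy, hs₁, hs₂⟩
    have hs : 0 < s := (div_pos ha hr).trans hs₁
    refine ⟨_, hy, Real.log s, ⟨Real.log_lt_log (div_pos ha hr) hs₁,
      Real.log_lt_log hs hs₂⟩, ?_⟩
    simp [Real.exp_log hs]

end

theorem measure_cylinder_general (m : ℕ) (β : EuclideanSpace ℝ (Fin m))
    (φ : EuclideanSpace ℝ (Fin m) × ℝ → ℝ)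
    (hφmeas : Measurable φ)
    (hflow : IsZFlowDensity β φ)
    (E : Set (EuclideanSpace ℝ (Fin m))) (hE : MeasurableSet E)
    (r a : ℝ) (hr : 1 < r) (ha : 0 < a) :
    muZ φ (cylinder β r a E) = ENNReal.ofReal (2 * Real.log r) * muN φ E := by
  have hr₀ : 0 < r := one_pos.trans hr
  set σ : EuclideanSpace ℝ (Fin m) × ℝ → EuclideanSpace ℝ (Fin m) × ℝ :=
    fun x => (x.1 - (x.2 - 1) • β, x.2)
  have hσ : MeasurePreserving σ := by
    rw [Measure.volume_eq_prod]
    exact measurePreserving_sub_shear volume volume (g := fun s => (s - 1) • β) (by fun_prop)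
  have hrect : MeasurableSet (E ×ˢ Ioo (a / r) (a * r)) := hE.prod measurableSet_Ioo
  have hφ₁ : Measurable fun n => ENNReal.ofReal (φ (n, 1)) := by fun_prop
  rw [cylinder_eq_preimage β hr₀ ha, muZ_apply hφmeas (hσ.measurable hrect)]
  calc _ = ∫⁻ x in σ ⁻¹' (E ×ˢ Ioo (a / r) (a * r)),
          ENNReal.ofReal (φ ((σ x).1, 1)) * ENNReal.ofReal (σ x).2⁻¹ := by
        refine setLIntegral_congr_fun (hσ.measurable hrect) fun x hx => ?_
        have hx₂ : 0 < x.2 := (div_pos ha hr₀).trans hx.2.1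
        rw [if_pos hx₂, hflow.apply_eq hx₂, mul_comm]
    _ = ∫⁻ y in E ×ˢ Ioo (a / r) (a * r), ENNReal.ofReal (φ (y.1, 1)) * ENNReal.ofReal y.2⁻¹ :=
        hσ.setLIntegral_comp_preimage hrect
          ((hφ₁.comp measurable_fst).mul measurable_snd.inv.ennreal_ofReal)
    _ = (∫⁻ n in E, ENNReal.ofReal (φ (n, 1))) *
          ∫⁻ s in Ioo (a / r) (a * r), ENNReal.ofReal s⁻¹ := by
        rw [Measure.volume_eq_prod, ← Measure.prod_restrict]
        exact lintegral_prod_mul (g := fun s => ENNReal.ofReal s⁻¹) hφ₁.aemeasurable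
          measurable_inv.ennreal_ofReal.aemeasurable
    _ = ENNReal.ofReal (2 * Real.log r) * muN φ E := by
        rw [lintegral_inv_Ioo_div_mul ha hr.le, muN, withDensity_apply _ hE, mul_comm]

/-- a `Z`-flow measure of a cylinder: `μ(P_{r,E}(a)) = 2 (log r) μ_N(E)`. -/
theorem measure_cylinder (m : ℕ) (hm : 1 ≤ m) (β : EuclideanSpace ℝ (Fin m))
    (φ : EuclideanSpace ℝ (Fin m) × ℝ → ℝ)
    (hφmeas : Measurable φ) (hφnonneg : ∀ x, 0 ≤ φ x)
    (hflow : IsZFlowDensity β φ)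
    (E : Set (EuclideanSpace ℝ (Fin m))) (hE : MeasurableSet E)
    (r a : ℝ) (hr : 1 < r) (ha : 0 < a) :
    muZ φ (cylinder β r a E) = ENNReal.ofReal (2 * Real.log r) * muN φ E :=
  measure_cylinder_general m β φ hφmeas hflow E hE r a hr ha
end
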